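/- For z > 0, define the set S(z) = { (p,q) in R^2 x R^2 : p_2 >= p_1 + z, q_2 >= q_1 + z, and 0 <= p_1, p_2, q_1, q_2 <= 3z }. Then the Lebesgue volume of S(z) equals 4 z^4, which tends to infinity as z tends to infinity, while the primal image G(S(z)) converges to the single point ((0,1),(0,1)): the supremum over (p,q) in S(z) of the l2 distance between G(p,q) and ((0,1),(0,1)) tends to 0 as z tends to infinity. Hence volume expansion in the dual space does not imply instability in the primal space. -/

import Mathlib

open MeasureTheory Filter

noncomputable def softmax {d : ℕ} (p : Fin d → ℝ) : Fin d → ℝ :=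
  fun j => Real.exp (p j) / ∑ l, Real.exp (p l)

noncomputable def G {n m : ℕ} (pq : (Fin n → ℝ) × (Fin m → ℝ)) :
    (Fin n → ℝ) × (Fin m → ℝ) :=
  (softmax pq.1, softmax pq.2)

noncomputable def Cfun {n m : ℕ} (A B : Matrix (Fin n) (Fin m) ℝ)
    (x : Fin n → ℝ) (y : Fin m → ℝ) : ℝ :=
  -∑ j, ∑ k, x j * y k * (A j k - A.mulVec y j) * (B j k - B.transpose.mulVec x k)

noncomputable def mwuStep {n m : ℕ} (A B : Matrix (Fin n) (Fin m) ℝ) (ε : ℝ)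
    (xy : (Fin n → ℝ) × (Fin m → ℝ)) : (Fin n → ℝ) × (Fin m → ℝ) :=
  (fun j => xy.1 j * Real.exp (ε * A.mulVec xy.2 j) /
      ∑ l, xy.1 l * Real.exp (ε * A.mulVec xy.2 l),
   fun k => xy.2 k * Real.exp (ε * B.transpose.mulVec xy.1 k) /
      ∑ l, xy.2 l * Real.exp (ε * B.transpose.mulVec xy.1 l))

noncomputable def mwuDual {n m : ℕ} (A B : Matrix (Fin n) (Fin m) ℝ) (ε : ℝ)
    (pq : (Fin n → ℝ) × (Fin m → ℝ)) : (Fin n → ℝ) × (Fin m → ℝ) :=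
  (fun j => pq.1 j + ε * A.mulVec (softmax pq.2) j,
   fun k => pq.2 k + ε * B.transpose.mulVec (softmax pq.1) k)


def primalSpace (n m : ℕ) : Set ((Fin n → ℝ) × (Fin m → ℝ)) :=
  {xy | xy.1 ∈ stdSimplex ℝ (Fin n) ∧ xy.2 ∈ stdSimplex ℝ (Fin m)}

def primalInterior (n m : ℕ) : Set ((Fin n → ℝ) × (Fin m → ℝ)) :=
  {xy | ((∑ j, xy.1 j) = 1 ∧ ∀ j, 0 < xy.1 j) ∧ ((∑ k, xy.2 k) = 1 ∧ ∀ k, 0 < xy.2 k)}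

noncomputable def ctriv {I J : Type*} [Fintype I] [Fintype J]
    (M : Matrix I J ℝ) : ℝ :=
  ⨅ a : I → ℝ, ⨅ b : J → ℝ,
    ((⨆ jk : I × J, (M jk.1 jk.2 - a jk.1 - b jk.2)) -
     (⨅ jk : I × J, (M jk.1 jk.2 - a jk.1 - b jk.2)))

def extremalDomain {n m : ℕ} (δ : ℝ) : Set ((Fin n → ℝ) × (Fin m → ℝ)) :=
  {xy | xy ∈ primalSpace n m ∧ (∃! j, 1 - δ ≤ xy.1 j) ∧ (∃! k, 1 - δ ≤ xy.2 k)}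

def Eset {n m : ℕ} (κ : ℝ) : Set ((Fin n → ℝ) × (Fin m → ℝ)) :=
  {xy | xy ∈ primalSpace n m ∧
    (∃ j1 j2, j1 ≠ j2 ∧ κ < xy.1 j1 ∧ κ < xy.1 j2) ∧
    (∃ k1 k2, k1 ≠ k2 ∧ κ < xy.2 k1 ∧ κ < xy.2 k2)}

noncomputable def dist2 {n m : ℕ} (u w : (Fin n → ℝ) × (Fin m → ℝ)) : ℝ :=
  Real.sqrt ((∑ j, (u.1 j - w.1 j)^2) + (∑ k, (u.2 k - w.2 k)^2))

noncomputable def diam2 {n m : ℕ} (S : Set ((Fin n → ℝ) × (Fin m → ℝ))) : ℝ :=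
  sSup {d | ∃ u ∈ S, ∃ w ∈ S, d = dist2 u w}

noncomputable def omwuPairStep {n m : ℕ} (A B : Matrix (Fin n) (Fin m) ℝ) (ε : ℝ)
    (s : ((Fin n → ℝ) × (Fin m → ℝ)) × ((Fin n → ℝ) × (Fin m → ℝ))) :
    ((Fin n → ℝ) × (Fin m → ℝ)) × ((Fin n → ℝ) × (Fin m → ℝ)) :=
  ((fun j => s.1.1 j + ε * (2 * A.mulVec (softmax s.1.2) j - A.mulVec (softmax s.2.2) j),
    fun k => s.1.2 k + ε * (2 * B.transpose.mulVec (softmax s.1.1) k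
        - B.transpose.mulVec (softmax s.2.1) k)),
   s.1)

noncomputable def omwuIter {n m : ℕ} (A B : Matrix (Fin n) (Fin m) ℝ) (ε : ℝ)
    (t : ℕ) (pq : (Fin n → ℝ) × (Fin m → ℝ)) : (Fin n → ℝ) × (Fin m → ℝ) :=
  ((omwuPairStep A B ε)^[t] (pq, pq)).2

noncomputable def gameValue {n m : ℕ} (A : Matrix (Fin n) (Fin m) ℝ) : ℝ :=
  ⨆ x ∈ stdSimplex ℝ (Fin n), ⨅ y ∈ stdSimplex ℝ (Fin m), ∑ j, ∑ k, x j * A j k * y k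

def subTrivSet {n m : ℕ} (A : Matrix (Fin n) (Fin m) ℝ) : Set ℝ :=
  {r | ∃ j1 j2 : Fin n, ∃ k1 k2 : Fin m, j1 ≠ j2 ∧ k1 ≠ k2 ∧
    r = ctriv (A.submatrix ![j1, j2] ![k1, k2])}

def entryGapSet {n m : ℕ} (A : Matrix (Fin n) (Fin m) ℝ) : Set ℝ :=
  {r | (∃ j : Fin n, ∃ k1 k2 : Fin m, k1 ≠ k2 ∧ r = |A j k1 - A j k2|) ∨
       (∃ j1 j2 : Fin n, ∃ k : Fin m, j1 ≠ j2 ∧ r = |A j1 k - A j2 k|)}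


/-!
`S z` is the square of the right triangle `{0 ≤ a, a + z ≤ b ≤ 3z}` with legs `2z`, whose area is
`2z²`. On the other hand `softmax p` puts mass at most `exp (p 0 - p 1) ≤ exp (-z)` on its first
coordinate, so both components of `G (S z)` lie within `√2 · exp (-z)` of the vertex `(0, 1)`.
-/

open Set

lemma volume_region_between_cc_eq_volume_regionBetween {α : Type*} [MeasurableSpace α]
    {μ : Measure α} [SFinite μ] {f g : α → ℝ} {s : Set α}
    (hf : Measurable f) (hg : Measurable g) (hs : MeasurableSet s) :
    μ.prod volume {p : α × ℝ | p.1 ∈ s ∧ p.2 ∈ Icc (f p.1) (g p.1)} =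
      μ.prod volume (regionBetween f g s) := by
  rw [Measure.prod_apply (measurableSet_region_between_cc hf hg hs),
    Measure.prod_apply (measurableSet_regionBetween hf hg hs)]
  refine lintegral_congr fun x => ?_
  by_cases hx : x ∈ s
  · simp only [regionBetween, preimage, mem_ofPred_eq, hx, true_and, ofPred_mem_eq,
      Real.volume_Icc, Real.volume_Ioo]
  · simp [regionBetween, preimage, hx]

def gapTriangle (z L : ℝ) : Set (Fin 2 → ℝ) :=
  {p | p 0 + z ≤ p 1 ∧ ∀ i, 0 ≤ p i ∧ p i ≤ L}

lemma gapTriangle_eq_preimage {z : ℝ} (hz : 0 ≤ z) (L : ℝ) :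
    gapTriangle z L = MeasurableEquiv.finTwoArrow ⁻¹'
      {p : ℝ × ℝ | p.1 ∈ Icc 0 (L - z) ∧ p.2 ∈ Icc (p.1 + z) L} := by
  ext p
  simp only [gapTriangle, Fin.forall_fin_two, mem_preimage, mem_ofPred_eq, mem_Icc,
    MeasurableEquiv.finTwoArrow_apply]
  constructor
  · rintro ⟨hgap, ⟨h0, -⟩, -, h1⟩
    exact ⟨⟨h0, by linarith⟩, hgap, h1⟩
  · rintro ⟨⟨h0, h0'⟩, hgap, h1⟩
    exact ⟨hgap, ⟨h0, by linarith⟩, by linarith, h1⟩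

lemma volume_gapTriangle {z L : ℝ} (hz : 0 ≤ z) (hzL : z ≤ L) :
    volume (gapTriangle z L) = ENNReal.ofReal ((L - z) ^ 2 / 2) := by
  have hmeas : MeasurableSet {p : ℝ × ℝ | p.1 ∈ Icc 0 (L - z) ∧ p.2 ∈ Icc (p.1 + z) L} :=
    measurableSet_region_between_cc (measurable_add_const z) measurable_const measurableSet_Icc
  rw [gapTriangle_eq_preimage hz,
    (volume_preserving_finTwoArrow ℝ).measure_preimage hmeas.nullMeasurableSet,
    Measure.volume_eq_prod,
    volume_region_between_cc_eq_volume_regionBetween (measurable_add_const z) measurable_const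
      measurableSet_Icc,
    volume_regionBetween_eq_integral (Continuous.integrableOn_Icc (by fun_prop))
      (Continuous.integrableOn_Icc (by fun_prop)) measurableSet_Icc
      (fun x hx => by linarith [hx.2]),
    integral_Icc_eq_integral_Ioc, ← intervalIntegral.integral_of_le (by linarith)]
  congr 1
  simp only [Pi.sub_apply, intervalIntegrable_const, intervalIntegral.intervalIntegrable_id,
    IntervalIntegrable.add, intervalIntegral.integral_sub, intervalIntegral.integral_const,
    intervalIntegral.integral_add, integral_id, smul_eq_mul, sub_zero, ne_eq,
    OfNat.ofNat_ne_zero, not_false_eq_true, zero_pow]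
  ring

lemma softmax_nonneg {d : ℕ} (p : Fin d → ℝ) (j : Fin d) : 0 ≤ softmax p j := by
  unfold softmax
  positivity

lemma softmax_fin_two_one (p : Fin 2 → ℝ) : softmax p 1 = 1 - softmax p 0 := by
  simp only [softmax, Fin.sum_univ_two]
  field_simp
  ring

lemma softmax_fin_two_zero_le (p : Fin 2 → ℝ) : softmax p 0 ≤ Real.exp (p 0 - p 1) := by
  rw [softmax, Fin.sum_univ_two, Real.exp_sub]
  exact div_le_div_of_nonneg_left (Real.exp_pos _).le (Real.exp_pos _)
    (le_add_of_nonneg_left (Real.exp_pos _).le)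

lemma sum_sq_softmax_sub_vertex_le {z : ℝ} {p : Fin 2 → ℝ} (hp : p 0 + z ≤ p 1) :
    ∑ j, (softmax p j - ![0, 1] j) ^ 2 ≤ 2 * Real.exp (-z) ^ 2 := by
  have hle : softmax p 0 ≤ Real.exp (-z) :=
    (softmax_fin_two_zero_le p).trans (Real.exp_le_exp.2 (by linarith))
  have hnonneg := softmax_nonneg p 0
  simp only [Fin.sum_univ_two, Matrix.cons_val_zero, Matrix.cons_val_one, softmax_fin_two_one]
  nlinarith

lemma dist2_G_vertex_le {z : ℝ} {u : (Fin 2 → ℝ) × (Fin 2 → ℝ)}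
    (h1 : u.1 0 + z ≤ u.1 1) (h2 : u.2 0 + z ≤ u.2 1) :
    dist2 (G u) (![0, 1], ![0, 1]) ≤ 2 * Real.exp (-z) := by
  rw [dist2, Real.sqrt_le_iff]
  dsimp only [G]
  exact ⟨by positivity, by
    linarith [sum_sq_softmax_sub_vertex_le h1, sum_sq_softmax_sub_vertex_le h2]⟩

/-- Dual volume expansion does not imply primal instability. -/
theorem dual_expansion_not_primal_instability
    (S : ℝ → Set ((Fin 2 → ℝ) × (Fin 2 → ℝ)))
    (hS : ∀ z : ℝ, S z = {pq | pq.1 0 + z ≤ pq.1 1 ∧ pq.2 0 + z ≤ pq.2 1 ∧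
      (∀ i, 0 ≤ pq.1 i ∧ pq.1 i ≤ 3 * z) ∧ (∀ i, 0 ≤ pq.2 i ∧ pq.2 i ≤ 3 * z)}) :
    (∀ z : ℝ, 0 < z → volume (S z) = ENNReal.ofReal (4 * z^4)) ∧
    Tendsto (fun z : ℝ => volume (S z)) atTop (nhds ⊤) ∧
    Tendsto (fun z : ℝ =>
        sSup {d : ℝ | ∃ u ∈ S z, d = dist2 (G u) (![0, 1], ![0, 1])})
      atTop (nhds 0) := by
  have hprod : ∀ z, S z = gapTriangle z (3 * z) ×ˢ gapTriangle z (3 * z) := by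
    intro z
    rw [hS z]
    ext pq
    simp only [gapTriangle, mem_ofPred_eq, mem_prod]
    tauto
  have hvol : ∀ z : ℝ, 0 < z → volume (S z) = ENNReal.ofReal (4 * z ^ 4) := by
    intro z hz
    rw [hprod, Measure.volume_eq_prod, Measure.prod_prod, volume_gapTriangle hz.le (by linarith),
      ← ENNReal.ofReal_mul (by positivity)]
    ring_nf
  have hdist : ∀ z, ∀ d ∈ {d : ℝ | ∃ u ∈ S z, d = dist2 (G u) (![0, 1], ![0, 1])},
      d ≤ 2 * Real.exp (-z) := by
    rintro z _ ⟨u, hu, rfl⟩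
    rw [hS z] at hu
    exact dist2_G_vertex_le hu.1 hu.2.1
  refine ⟨hvol, ?_, ?_⟩
  · refine Tendsto.congr' ((eventually_gt_atTop 0).mono fun z hz => (hvol z hz).symm) ?_
    exact ENNReal.tendsto_ofReal_atTop.comp
      ((tendsto_pow_atTop four_ne_zero).const_mul_atTop four_pos)
  · refine squeeze_zero (fun z => Real.sSup_nonneg ?_)
      (fun z => Real.sSup_le (hdist z) (by positivity)) ?_
    · rintro _ ⟨u, -, rfl⟩
      exact Real.sqrt_nonneg _
    · simpa using Real.tendsto_exp_neg_atTop_nhds_zero.const_mul 2
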